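/- Invariance of Φ^Ξ under reordering of tetrahedra: let Ξ = (A,B,ν,z,f,f'') be a nondegenerate formal Neumann–Zagier datum of size N over a field K of characteristic zero, let σ be a permutation of {1,…,N} with permutation matrix P_σ, and define Ξ·σ := (A·P_σ, B·P_σ, ν, σ^{−1}·z, σ^{−1}·f, σ^{−1}·f''), where (σ^{−1}·v)_i := v_{σ(i)}. Then Ξ·σ is again a nondegenerate formal Neumann–Zagier datum and Φ^{Ξ·σ}(ħ) = Φ^{Ξ}(ħ). -/

import Mathlib

open scoped BigOperators
open Matrix

noncomputable section Defs

/-- Formal exponential of a power series (agreeing with the genuine exponential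
whenever the constant term of `g` vanishes). -/
def expPS {A : Type*} [CommRing A] [Algebra ℚ A] (g : PowerSeries A) : PowerSeries A :=
  PowerSeries.mk fun n => ∑ m ∈ Finset.range (n + 1),
    ((m.factorial : ℚ)⁻¹) • PowerSeries.coeff n (g ^ m)

/-- Substitution along a ring homomorphism `S : A →+* A⟦t⟧`, applied
coefficientwise to a power series in `t` and re-expanded in `t`. -/
def substAlong {A : Type*} [CommRing A] (S : A →+* PowerSeries A) (f : PowerSeries A) :
    PowerSeries A :=
  PowerSeries.mk fun n => ∑ m ∈ Finset.range (n + 1),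
    PowerSeries.coeff (n - m) (S (PowerSeries.coeff m f))

/-- The second order differential operator `Σ_{i,j} L i j ∂_i ∂_j` on polynomials. -/
def gaussD {R : Type*} [CommRing R] {ι : Type*} [Fintype ι] (L : Matrix ι ι R)
    (p : MvPolynomial ι R) : MvPolynomial ι R :=
  ∑ i, ∑ j, L i j • MvPolynomial.pderiv i (MvPolynomial.pderiv j p)

/-- `exp((1/2) Σ_{i,j} L_{ij} ∂_i ∂_j) p |_{x = 0}`; the exponential series
terminates on polynomials since the operator lowers total degree by two. -/
def gaussBV {R : Type*} [CommRing R] [Algebra ℚ R] {ι : Type*} [Fintype ι]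
    (L : Matrix ι ι R) (p : MvPolynomial ι R) : R :=
  MvPolynomial.constantCoeff
    (∑ m ∈ Finset.range (p.totalDegree + 1),
      ((1 : ℚ) / ((2 : ℚ) ^ m * m.factorial)) • (gaussD L)^[m] p)

/-- Formal Gaussian integration `⟨f⟩_{x,Λ}` of a formal power series with
polynomial coefficients, with respect to the invertible symmetric matrix `Λ`. -/
def fgi {R : Type*} [CommRing R] [Algebra ℚ R] {ι : Type*} [Fintype ι] [DecidableEq ι]
    (Λ : Matrix ι ι R) (f : PowerSeries (MvPolynomial ι R)) : PowerSeries R :=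
  PowerSeries.mk fun n => gaussBV Λ⁻¹ (PowerSeries.coeff n f)

/-- Polynomial numerators of the negative polylogarithms:
`Li_{-n}(z) = LiPoly n (z) / (1-z)^(n+1)`. -/
def LiPoly : ℕ → Polynomial ℚ
  | 0 => Polynomial.X
  | n + 1 => Polynomial.X *
      (Polynomial.derivative (LiPoly n) * (1 - Polynomial.X) + ((n : ℚ) + 1) • LiPoly n)

/-- The rational function `Li_{-n}(z)`, defined recursively by
`Li_0(z) = z/(1-z)` and `Li_{-n-1}(z) = z · (d/dz) Li_{-n}(z)`. -/
def negLi {K : Type*} [Field K] [CharZero K] (n : ℕ) (z : K) : K :=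
  Polynomial.aeval z (LiPoly n) / (1 - z) ^ (n + 1)

/-- The formal power series `ψ_ħ(ξ, z)` in `t = ħ^{1/2}`:
`exp(−Σ_{k,ℓ ≥ 0, k+ℓ/2 > 1} (B_k ξ^ℓ ħ^{k+ℓ/2−1}/(ℓ! k!)) Li_{2−k−ℓ}(z))`. -/
def psi {K : Type*} [Field K] [CharZero K] {A : Type*} [CommRing A] [Algebra ℚ A]
    [Algebra K A] (ξ : A) (z : K) : PowerSeries A :=
  expPS (PowerSeries.mk fun n =>
    if n = 0 then 0 else
      - ∑ k ∈ Finset.range ((n + 2) / 2 + 1),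
          algebraMap K A
              ((bernoulli k / ((k.factorial : ℚ) * ((n + 2 - 2 * k).factorial : ℚ))) •
                negLi (n - k) z) *
            ξ ^ (n + 2 - 2 * k))

end Defs

noncomputable section NZDef

/-- The data of a formal Neumann–Zagier datum `Ξ = (A, B, ν, z, f, f'')`. -/
structure NZ (K ι : Type*) where
  A : Matrix ι ι ℤ
  B : Matrix ι ι ℤ
  ν : ι → ℤ
  z : ι → K
  f : ι → ℤ
  f'' : ι → ℤ

namespace NZ

variable {K : Type*} [Field K] [CharZero K] {ι : Type*} [Fintype ι] [DecidableEq ι]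

/-- `A` as a matrix over `K`. -/
def AK (Ξ : NZ K ι) : Matrix ι ι K := Ξ.A.map fun n => (n : K)

/-- `B` as a matrix over `K`. -/
def BK (Ξ : NZ K ι) : Matrix ι ι K := Ξ.B.map fun n => (n : K)

/-- The quadratic form `Λ = −B⁻¹A + diag(1/(1−z_j))`. -/
def Lam (Ξ : NZ K ι) : Matrix ι ι K :=
  -(Ξ.BK⁻¹ * Ξ.AK) + Matrix.diagonal fun j => (1 - Ξ.z j)⁻¹

/-- Nondegeneracy of a formal Neumann–Zagier datum: `A Bᵗ` is symmetric,
`det B ≠ 0`, `(f, f'')` is a flattening, the shapes avoid `0` and `1`, and the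
quadratic form `Λ` is invertible. -/
def IsNondeg (Ξ : NZ K ι) : Prop :=
  (Ξ.A * Ξ.Bᵀ)ᵀ = Ξ.A * Ξ.Bᵀ ∧ Ξ.B.det ≠ 0 ∧
    Ξ.A.mulVec Ξ.f + Ξ.B.mulVec Ξ.f'' = Ξ.ν ∧
    (∀ j, Ξ.z j ≠ 0) ∧ (∀ j, Ξ.z j ≠ 1) ∧ IsUnit Ξ.Lam.det

/-- The vector `B⁻¹ ν` over `K`. -/
def w (Ξ : NZ K ι) : ι → K := Ξ.BK⁻¹.mulVec fun i => (Ξ.ν i : K)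

/-- The linear part `(1/2) xᵗ 1 − (1/2) xᵗ B⁻¹ ν` of the exponential prefactor. -/
def linPart (Ξ : NZ K ι) : MvPolynomial ι K :=
  ∑ i, MvPolynomial.C ((1 - Ξ.w i) / 2) * MvPolynomial.X i

/-- The constant `(1/8) fᵗ B⁻¹ A f`. -/
def quadConst (Ξ : NZ K ι) : K :=
  dotProduct (fun i => (Ξ.f i : K)) ((Ξ.BK⁻¹ * Ξ.AK).mulVec fun i => (Ξ.f i : K)) / 8

/-- The integrand
`f^Ξ_ħ(x,z) = exp((ħ^{1/2}/2) xᵗ1 − (ħ^{1/2}/2) xᵗB⁻¹ν + (ħ/8) fᵗB⁻¹Af) ∏_i ψ_ħ(x_i, z_i)`. -/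
def integrand (Ξ : NZ K ι) : PowerSeries (MvPolynomial ι K) :=
  expPS (PowerSeries.monomial 1 Ξ.linPart +
      PowerSeries.monomial 2 (MvPolynomial.C Ξ.quadConst)) *
    ∏ i, psi (MvPolynomial.X i) (Ξ.z i)

/-- The formal power series `Φ^Ξ(ħ) = ⟨f^Ξ_ħ(x,z)⟩_{x,Λ}`. -/
def Phi (Ξ : NZ K ι) : PowerSeries K := fgi Ξ.Lam Ξ.integrand

end NZ

end NZDef

/-- The permutation matrix `P_σ` of a permutation `σ`. -/
def permMat {ι : Type*} [DecidableEq ι] (σ : Equiv.Perm ι) : Matrix ι ι ℤ :=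
  Matrix.of fun i j => if i = σ j then 1 else 0

/-- The Neumann–Zagier datum obtained by reordering the tetrahedra:
`Ξ·σ = (A P_σ, B P_σ, ν, σ⁻¹·z, σ⁻¹·f, σ⁻¹·f'')` with `(σ⁻¹·v) i = v (σ i)`. -/
def NZ.permMove {K ι : Type*} [Fintype ι] [DecidableEq ι] (Ξ : NZ K ι) (σ : Equiv.Perm ι) : NZ K ι where
  A := Ξ.A * permMat σ
  B := Ξ.B * permMat σ
  ν := Ξ.ν
  z := fun i => Ξ.z (σ i)
  f := fun i => Ξ.f (σ i)
  f'' := fun i => Ξ.f'' (σ i)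


set_option linter.unusedSectionVars false

noncomputable section AuxPerm

open MvPolynomial

variable {ι : Type*} [Fintype ι] [DecidableEq ι]

/-- Permutation matrix over an arbitrary ring. -/
def PMat (σ : Equiv.Perm ι) (R : Type*) [CommRing R] : Matrix ι ι R :=
  Matrix.of fun i j => if i = σ j then 1 else 0

variable {R : Type*} [CommRing R] (σ : Equiv.Perm ι)

lemma permMat_eq_PMat : permMat σ = PMat σ ℤ := rfl

lemma permMat_map : (permMat σ).map (Int.cast : ℤ → R) = PMat σ R := by
  ext i j
  simp [permMat, PMat, Matrix.map_apply, apply_ite (Int.cast : ℤ → R)]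

lemma mul_PMat (M : Matrix ι ι R) : M * PMat σ R = M.submatrix id ⇑σ := by
  ext i j
  simp [Matrix.mul_apply, PMat, mul_ite]

lemma PMatT_mul (M : Matrix ι ι R) : (PMat σ R)ᵀ * M = M.submatrix ⇑σ id := by
  ext i j
  simp [Matrix.mul_apply, PMat, ite_mul, Matrix.transpose_apply]

lemma PMat_mul_PMatT : PMat σ R * (PMat σ R)ᵀ = 1 := by
  ext i j
  simp only [Matrix.mul_apply, PMat, Matrix.transpose_apply, Matrix.of_apply, ite_mul, mul_ite,
    one_mul, mul_one, mul_zero, zero_mul]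
  rw [Finset.sum_eq_single (σ.symm i)]
  · simp [Matrix.one_apply, eq_comm]
  · intro b _ hb
    have hni : ¬ i = σ b := fun hc => hb (by rw [hc, Equiv.symm_apply_apply])
    simp [hni]
  · simp

lemma PMat_mulVec (v : ι → R) : (PMat σ R).mulVec v = fun i => v (σ.symm i) := by
  funext i
  simp only [Matrix.mulVec, dotProduct, PMat, Matrix.of_apply, ite_mul, one_mul, zero_mul]
  rw [Finset.sum_eq_single (σ.symm i)] <;> simp +contextual [Equiv.eq_symm_apply, eq_comm]

lemma submatrix_id_mulVec (M : Matrix ι ι R) (v : ι → R) :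
    (M.submatrix ⇑σ id).mulVec v = fun i => M.mulVec v (σ i) := by
  funext i
  simp [Matrix.mulVec, dotProduct, Matrix.submatrix_apply]

end AuxPerm

noncomputable section AuxNZ

open MvPolynomial

variable {K : Type*} [Field K] [CharZero K] {ι : Type*} [Fintype ι] [DecidableEq ι]
variable (Ξ : NZ K ι) (σ : Equiv.Perm ι)

lemma AK_perm : (Ξ.permMove σ).AK = Ξ.AK.submatrix id ⇑σ := by
  show ((Ξ.A * permMat σ).map _) = _
  rw [show ((Ξ.A * permMat σ).map fun n => (n : K)) = Ξ.AK * (permMat σ).map (Int.cast : ℤ → K)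
      from Matrix.map_mul (f := Int.castRingHom K), permMat_map, mul_PMat]

lemma BK_perm : (Ξ.permMove σ).BK = Ξ.BK * PMat σ K := by
  show ((Ξ.B * permMat σ).map _) = _
  rw [show ((Ξ.B * permMat σ).map fun n => (n : K)) = Ξ.BK * (permMat σ).map (Int.cast : ℤ → K)
      from Matrix.map_mul (f := Int.castRingHom K), permMat_map]

lemma Binv_perm : (Ξ.permMove σ).BK⁻¹ = (PMat σ K)ᵀ * Ξ.BK⁻¹ := by
  rw [BK_perm, Matrix.mul_inv_rev, Matrix.inv_eq_right_inv (PMat_mul_PMatT σ)]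

lemma mul_submatrix_id_right {R : Type*} [CommRing R] (M N : Matrix ι ι R) (e : ι → ι) :
    M * N.submatrix id e = (M * N).submatrix id e := by
  ext i j
  simp [Matrix.mul_apply, Matrix.submatrix_apply]

lemma BinvA_perm :
    (Ξ.permMove σ).BK⁻¹ * (Ξ.permMove σ).AK = (Ξ.BK⁻¹ * Ξ.AK).submatrix ⇑σ ⇑σ := by
  rw [Binv_perm, AK_perm, Matrix.mul_assoc, mul_submatrix_id_right, PMatT_mul,
    Matrix.submatrix_submatrix]
  rfl

lemma Lam_perm : (Ξ.permMove σ).Lam = Ξ.Lam.submatrix ⇑σ ⇑σ := by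
  unfold NZ.Lam
  rw [BinvA_perm]
  ext i j
  by_cases hij : i = j <;>
    simp [NZ.permMove, Matrix.submatrix_apply, Matrix.diagonal_apply, hij,
      σ.injective.eq_iff]

lemma w_perm : (Ξ.permMove σ).w = fun i => Ξ.w (σ i) := by
  unfold NZ.w
  rw [Binv_perm, PMatT_mul, submatrix_id_mulVec]
  rfl

lemma quadConst_perm : (Ξ.permMove σ).quadConst = Ξ.quadConst := by
  unfold NZ.quadConst
  rw [BinvA_perm]
  congr 1
  have h1 : ((Ξ.BK⁻¹ * Ξ.AK).submatrix ⇑σ ⇑σ).mulVec (fun i => ((Ξ.permMove σ).f i : K))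
      = fun i => (Ξ.BK⁻¹ * Ξ.AK).mulVec (fun i => (Ξ.f i : K)) (σ i) := by
    funext i
    show ∑ j, (Ξ.BK⁻¹ * Ξ.AK) (σ i) (σ j) * ((Ξ.f (σ j) : ℤ) : K) = _
    exact Equiv.sum_comp σ fun b => (Ξ.BK⁻¹ * Ξ.AK) (σ i) b * (Ξ.f b : K)
  rw [h1]
  exact Equiv.sum_comp σ fun b => (Ξ.f b : K) * (Ξ.BK⁻¹ * Ξ.AK).mulVec (fun i => (Ξ.f i : K)) b

lemma linPart_perm : (Ξ.permMove σ).linPart = (rename ⇑σ.symm) Ξ.linPart := by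
  unfold NZ.linPart
  rw [map_sum]
  refine Fintype.sum_equiv σ _ _ fun i => ?_
  rw [_root_.map_mul, rename_C, rename_X, Equiv.symm_apply_apply, w_perm]

lemma expPS_map {A B : Type*} [CommRing A] [Algebra ℚ A] [CommRing B] [Algebra ℚ B]
    (φ : A →+* B) (hφ : ∀ (q : ℚ) (a : A), φ (q • a) = q • φ a) (g : PowerSeries A) :
    PowerSeries.map φ (expPS g) = expPS (PowerSeries.map φ g) := by
  ext n
  simp only [expPS, PowerSeries.coeff_map, PowerSeries.coeff_mk]
  rw [map_sum]
  refine Finset.sum_congr rfl fun m _ => ?_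
  rw [hφ, ← map_pow, PowerSeries.coeff_map]

lemma rename_rat_smul (e : ι → ι) (q : ℚ) (p : MvPolynomial ι K) :
    (rename e) (q • p) = q • (rename e) p := by
  rw [← smul_one_smul K q p, _root_.map_smul, smul_one_smul]

lemma psmap_monomial {A B : Type*} [CommRing A] [CommRing B] (φ : A →+* B) (n : ℕ) (a : A) :
    PowerSeries.map φ (PowerSeries.monomial n a) = PowerSeries.monomial n (φ a) := by
  ext m
  simp [PowerSeries.coeff_map, PowerSeries.coeff_monomial, apply_ite φ]

lemma psi_rename (e : ι → ι) (ξ : MvPolynomial ι K) (z : K) :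
    PowerSeries.map ((rename e : MvPolynomial ι K →ₐ[K] MvPolynomial ι K) :
        MvPolynomial ι K →+* MvPolynomial ι K) (psi ξ z) = psi ((rename e) ξ) z := by
  unfold psi
  rw [expPS_map _ (by simpa using rename_rat_smul (K := K) e)]
  refine congrArg expPS ?_
  apply PowerSeries.ext
  intro n
  rw [PowerSeries.coeff_map, PowerSeries.coeff_mk, PowerSeries.coeff_mk]
  by_cases hn : n = 0 <;>
    simp [hn, map_neg, _root_.map_mul, map_pow]

lemma integrand_perm :
    (Ξ.permMove σ).integrand =
      PowerSeries.map ((rename ⇑σ.symm : MvPolynomial ι K →ₐ[K] MvPolynomial ι K) :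
        MvPolynomial ι K →+* MvPolynomial ι K) Ξ.integrand := by
  unfold NZ.integrand
  rw [_root_.map_mul]
  congr 1
  · rw [expPS_map _ (by simpa using rename_rat_smul (K := K) ⇑σ.symm), map_add,
      psmap_monomial, psmap_monomial]
    rw [linPart_perm Ξ σ, quadConst_perm Ξ σ]
    simp [rename_C]
  · rw [map_prod]
    refine Fintype.prod_equiv σ _ _ fun i => ?_
    rw [psi_rename ⇑σ.symm (X (σ i)) (Ξ.z (σ i))]
    simp [NZ.permMove]

lemma gaussD_perm (L : Matrix ι ι K) (p : MvPolynomial ι K) :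
    gaussD (L.submatrix ⇑σ ⇑σ) ((rename ⇑σ.symm) p) = (rename ⇑σ.symm) (gaussD L p) := by
  have key : ∀ (j : ι) (q : MvPolynomial ι K),
      pderiv j ((rename ⇑σ.symm) q) = (rename ⇑σ.symm) (pderiv (σ j) q) := by
    intro j q
    have := pderiv_rename (f := ⇑σ.symm) σ.symm.injective (σ j) q
    simpa using this
  unfold gaussD
  rw [map_sum]
  refine Fintype.sum_equiv σ _ _ fun i => ?_
  rw [map_sum]
  refine Fintype.sum_equiv σ _ _ fun j => ?_
  rw [Matrix.submatrix_apply, key, key, _root_.map_smul]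

lemma gaussD_perm_iter (L : Matrix ι ι K) (p : MvPolynomial ι K) (m : ℕ) :
    (gaussD (L.submatrix ⇑σ ⇑σ))^[m] ((rename ⇑σ.symm) p)
      = (rename ⇑σ.symm) ((gaussD L)^[m] p) := by
  induction m with
  | zero => rfl
  | succ m ih =>
      rw [Function.iterate_succ_apply', Function.iterate_succ_apply', ih, gaussD_perm]

lemma totalDegree_rename_perm (e : Equiv.Perm ι) (p : MvPolynomial ι K) :
    ((rename ⇑e) p).totalDegree = p.totalDegree := by
  refine le_antisymm (totalDegree_rename_le _ _) ?_
  conv_lhs => rw [show p = (rename ⇑e.symm) ((rename ⇑e) p) by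
    rw [rename_rename]; simp [Equiv.symm_comp_self]]
  exact totalDegree_rename_le _ _

lemma gaussBV_perm (L : Matrix ι ι K) (p : MvPolynomial ι K) :
    gaussBV (L.submatrix ⇑σ ⇑σ) ((rename ⇑σ.symm) p) = gaussBV L p := by
  unfold gaussBV
  rw [totalDegree_rename_perm]
  rw [map_sum, map_sum]
  refine Finset.sum_congr rfl fun m _ => ?_
  rw [gaussD_perm_iter, constantCoeff_smul, constantCoeff_smul, constantCoeff_rename]

lemma Laminv_perm : (Ξ.permMove σ).Lam⁻¹ = Ξ.Lam⁻¹.submatrix ⇑σ ⇑σ := by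
  rw [Lam_perm, Matrix.inv_submatrix_equiv Ξ.Lam σ σ]

end AuxNZ

/-- Invariance of `Φ^Ξ` under reordering of the tetrahedra:
if `Ξ` is a nondegenerate formal Neumann–Zagier datum and `σ` a permutation,
then `Ξ·σ` is again nondegenerate and `Φ^{Ξ·σ}(ħ) = Φ^Ξ(ħ)`. -/
theorem Phi_perm_invariance {K : Type*} [Field K] [CharZero K] {N : ℕ}
    (Ξ : NZ K (Fin N)) (h : Ξ.IsNondeg) (σ : Equiv.Perm (Fin N)) :
    (Ξ.permMove σ).IsNondeg ∧ (Ξ.permMove σ).Phi = Ξ.Phi := by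
  obtain ⟨hsym, hdet, hflat, hz0, hz1, hunit⟩ := h
  have hPP : PMat σ ℤ * (PMat σ ℤ)ᵀ = 1 := PMat_mul_PMatT σ
  constructor
  · refine ⟨?_, ?_, ?_, fun j => hz0 _, fun j => hz1 _, ?_⟩
    · show ((Ξ.A * permMat σ) * (Ξ.B * permMat σ)ᵀ)ᵀ = (Ξ.A * permMat σ) * (Ξ.B * permMat σ)ᵀ
      have key : (Ξ.A * permMat σ) * (Ξ.B * permMat σ)ᵀ = Ξ.A * Ξ.Bᵀ := by
        rw [permMat_eq_PMat, Matrix.transpose_mul, Matrix.mul_assoc,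
          ← Matrix.mul_assoc (PMat σ ℤ), hPP, Matrix.one_mul]
      rw [key]; exact hsym
    · show (Ξ.B * permMat σ).det ≠ 0
      rw [permMat_eq_PMat, Matrix.det_mul]
      have h1 : (PMat σ ℤ).det * (PMat σ ℤ).det = 1 := by
        have h2 := congrArg Matrix.det hPP
        rwa [Matrix.det_mul, Matrix.det_transpose, Matrix.det_one] at h2
      exact mul_ne_zero hdet (fun h0 => by simp [h0] at h1)
    · show (Ξ.A * permMat σ).mulVec (fun i => Ξ.f (σ i)) +
          (Ξ.B * permMat σ).mulVec (fun i => Ξ.f'' (σ i)) = Ξ.ν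
      rw [permMat_eq_PMat, ← Matrix.mulVec_mulVec, ← Matrix.mulVec_mulVec,
        PMat_mulVec, PMat_mulVec]
      simp only [Equiv.apply_symm_apply]
      exact hflat
    · rw [Lam_perm, Matrix.det_submatrix_equiv_self]
      exact hunit
  · apply PowerSeries.ext
    intro n
    simp only [NZ.Phi, fgi, PowerSeries.coeff_mk]
    rw [integrand_perm, Laminv_perm, PowerSeries.coeff_map]
    exact gaussBV_perm σ Ξ.Lam⁻¹ _
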